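/- Let (V, #, ∗) be a hypervector space over a hyperfield (F, ⊕, ·) with zero vector θ, and let α₁, α₂, ..., αₙ be nonzero vectors of V. Then {α₁, ..., αₙ} is linearly dependent if and only if some αᵢ (with i ≥ 2) is a linear combination of the preceding vectors, i.e., αᵢ ∈ a₁∗α₁ # a₂∗α₂ # ... # a_{i−1}∗α_{i−1} for some scalars a₁, ..., a_{i−1} ∈ F. -/
import Mathlib


universe u v

/-- A hyperfield: `(F, ⊕, ·)` where `(F, ⊕)` is a commutative hypergroup with zero
element `zero` (each `a` having a unique additive inverse `neg a`, and satisfying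
reversibility), and `·` is an associative commutative multiplication distributing
over `⊕` from both sides, with `a·0 = 0·a = 0`, an identity `one` and multiplicative
inverses for nonzero elements. -/
structure Hyperfield (F : Type u) where
  add : F → F → Set F
  add_nonempty : ∀ a b, (add a b).Nonempty
  add_comm : ∀ a b, add a b = add b a
  add_assoc : ∀ a b c, (⋃ t ∈ add b c, add a t) = ⋃ t ∈ add a b, add t c
  zero : F
  neg : F → F
  neg_spec : ∀ a, zero ∈ add a (neg a) ∧ zero ∈ add (neg a) a
  neg_unique : ∀ a b, zero ∈ add a b → zero ∈ add b a → b = neg a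
  reversible : ∀ a b c, a ∈ add b c → b ∈ add a (neg c)
  mul : F → F → F
  mul_assoc : ∀ a b c, mul (mul a b) c = mul a (mul b c)
  left_distrib : ∀ a b c, (mul a) '' (add b c) = add (mul a b) (mul a c)
  right_distrib : ∀ a b c, (fun t => mul t a) '' (add b c) = add (mul b a) (mul c a)
  mul_zero : ∀ a, mul a zero = zero
  zero_mul : ∀ a, mul zero a = zero
  one : F
  mul_one : ∀ a, mul a one = a
  one_ne_zero : one ≠ zero
  mul_comm : ∀ a b, mul a b = mul b a
  exists_inv : ∀ a, a ≠ zero → ∃ b, mul a b = one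

/-- A hypervector space `(V, #, ∗)` over a hyperfield `K` on `F`:
`(V, #)` is a commutative hypergroup with zero vector `vzero`, and
`∗ : F × V → P*(V)` satisfies (i) `a ∗ (α # β) ⊆ a∗α # a∗β`,
(ii) `(a ⊕ b) ∗ α ⊆ a∗α # b∗α`, (iii) `(a·b) ∗ α = a ∗ (b ∗ α)`,
(iv) `1 ∗ α = {α}` and `0 ∗ α = {θ}`. -/
structure HypervectorSpace (F : Type u) (V : Type v) (K : Hyperfield F) where
  vadd : V → V → Set V
  vadd_nonempty : ∀ x y, (vadd x y).Nonempty
  vadd_comm : ∀ x y, vadd x y = vadd y x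
  vadd_assoc : ∀ x y z, (⋃ t ∈ vadd y z, vadd x t) = ⋃ t ∈ vadd x y, vadd t z
  vzero : V
  vneg : V → V
  vneg_spec : ∀ x, vzero ∈ vadd x (vneg x) ∧ vzero ∈ vadd (vneg x) x
  vneg_unique : ∀ x y, vzero ∈ vadd x y → vzero ∈ vadd y x → y = vneg x
  vreversible : ∀ x y z, x ∈ vadd y z → y ∈ vadd x (vneg z)
  smul : F → V → Set V
  smul_nonempty : ∀ a x, (smul a x).Nonempty
  smul_vadd : ∀ a x y, (⋃ t ∈ vadd x y, smul a t) ⊆ ⋃ u ∈ smul a x, ⋃ w ∈ smul a y, vadd u w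
  add_smul : ∀ a b x, (⋃ t ∈ K.add a b, smul t x) ⊆ ⋃ u ∈ smul a x, ⋃ w ∈ smul b x, vadd u w
  mul_smul : ∀ a b x, smul (K.mul a b) x = ⋃ t ∈ smul b x, smul a t
  one_smul : ∀ x, smul K.one x = {x}
  zero_smul : ∀ x, smul K.zero x = {vzero}

namespace HypervectorSpace

variable {F : Type u} {V : Type v} {K : Hyperfield F}

/-- The hyperoperation `#` extended to subsets: `A # B = ⋃_{a ∈ A, b ∈ B} a # b`. -/
def setVadd (H : HypervectorSpace F V K) (A B : Set V) : Set V :=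
  ⋃ a ∈ A, ⋃ b ∈ B, H.vadd a b

/-- A subset `W` of a hypervector space is a hypersubspace if it is closed under `#`
and `∗`, contains the zero vector, and contains additive inverses. -/
def IsHypersubspace (H : HypervectorSpace F V K) (W : Set V) : Prop :=
  (∀ α ∈ W, ∀ β ∈ W, H.vadd α β ⊆ W) ∧
  (∀ a : F, ∀ α ∈ W, H.smul a α ⊆ W) ∧
  H.vzero ∈ W ∧
  (∀ α ∈ W, H.vneg α ∈ W)

/-- Iterated hyperoperation `A₁ # A₂ # ... # Aₙ` on a list of subsets
(by convention the empty hypersum is `{θ}`). -/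
def hsum (H : HypervectorSpace F V K) : List (Set V) → Set V
  | [] => {H.vzero}
  | [A] => A
  | A :: B :: rest => H.setVadd A (HypervectorSpace.hsum H (B :: rest))

/-- The linear combination set `a₁∗α₁ # a₂∗α₂ # ... # aₙ∗αₙ`. -/
def lincomb (H : HypervectorSpace F V K) {n : ℕ} (a : Fin n → F) (α : Fin n → V) : Set V :=
  H.hsum (List.ofFn fun i => H.smul (a i) (α i))

/-- The hyperlinear span `HL(α₁, ..., αₙ) = ⋃ { a₁∗α₁ # ... # aₙ∗αₙ : a₁, ..., aₙ ∈ F }`. -/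
def HL (H : HypervectorSpace F V K) {n : ℕ} (α : Fin n → V) : Set V :=
  ⋃ a : Fin n → F, H.lincomb a α

/-- The family `α₁, ..., αₙ` is linearly dependent if `θ ∈ a₁∗α₁ # ... # aₙ∗αₙ`
for some scalars `a₁, ..., aₙ`, not all zero. -/
def LinDep (H : HypervectorSpace F V K) {n : ℕ} (α : Fin n → V) : Prop :=
  ∃ a : Fin n → F, (∃ i, a i ≠ K.zero) ∧ H.vzero ∈ H.lincomb a α

/-- Strongly left distributive: equality `(a ⊕ b) ∗ α = a∗α # b∗α`. -/
def StronglyLeftDistrib (H : HypervectorSpace F V K) : Prop :=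
  ∀ (a b : F) (x : V),
    (⋃ t ∈ K.add a b, H.smul t x) = ⋃ u ∈ H.smul a x, ⋃ w ∈ H.smul b x, H.vadd u w

/-- The set of all finite linear combinations of elements of `S`. -/
def HLSet (H : HypervectorSpace F V K) (S : Set V) : Set V :=
  ⋃ n : ℕ, ⋃ β : Fin n → V, ⋃ (_ : ∀ i, β i ∈ S), H.HL β

/-- A set `S` is linearly independent if every finite family of distinct elements
of `S` is linearly independent. -/
def LinIndepSet (H : HypervectorSpace F V K) (S : Set V) : Prop :=
  ∀ (n : ℕ) (β : Fin n → V), Function.Injective β → (∀ i, β i ∈ S) → ¬ H.LinDep β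

/-- `S` is a basis of the hypersubspace `U`: `S ⊆ U`, `S` is linearly independent,
and every element of `U` is a finite linear combination of elements of `S`. -/
def IsBasisOf (H : HypervectorSpace F V K) (S U : Set V) : Prop :=
  S ⊆ U ∧ H.LinIndepSet S ∧ U ⊆ H.HLSet S

end HypervectorSpace

namespace Hyperfield

variable {F : Type u} (K : Hyperfield F)

lemma neg_neg' (a : F) : K.neg (K.neg a) = a :=
  (K.neg_unique (K.neg a) a (K.neg_spec a).2 (K.neg_spec a).1).symm

lemma neg_zero' : K.neg K.zero = K.zero := by
  have h1 : K.zero ∈ K.add K.zero (K.neg K.zero) := (K.neg_spec _).1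
  have h2 : K.zero ∈ (K.mul K.zero) '' (K.add K.zero (K.neg K.zero)) :=
    ⟨K.zero, h1, K.zero_mul _⟩
  rw [K.left_distrib, K.zero_mul, K.zero_mul] at h2
  exact (K.neg_unique K.zero K.zero h2 h2).symm

lemma neg_one_ne_zero : K.neg K.one ≠ K.zero := by
  intro h
  apply K.one_ne_zero
  have := congrArg K.neg h
  rw [K.neg_neg', K.neg_zero'] at this
  exact this

end Hyperfield

namespace HypervectorSpace

variable {F : Type u} {V : Type v} {K : Hyperfield F} (H : HypervectorSpace F V K)

lemma vneg_vneg (x : V) : H.vneg (H.vneg x) = x :=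
  (H.vneg_unique (H.vneg x) x (H.vneg_spec x).2 (H.vneg_spec x).1).symm

lemma eq_vneg {x y : V} (h : H.vzero ∈ H.vadd x y) : y = H.vneg x :=
  H.vneg_unique x y h (by rw [H.vadd_comm]; exact h)

lemma eq_of_mem_vadd_vzero {x y : V} (h : x ∈ H.vadd y H.vzero) : x = y := by
  have h1 : H.vzero ∈ ⋃ t ∈ H.vadd y H.vzero, H.vadd t (H.vneg x) :=
    Set.mem_biUnion h (H.vneg_spec x).1
  rw [← H.vadd_assoc] at h1
  obtain ⟨t, ht, h2⟩ := Set.mem_iUnion₂.1 h1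
  have h3 : t = H.vneg y := H.eq_vneg h2
  rw [h3] at ht
  have h4 := H.vreversible _ _ _ ht
  rw [H.vneg_vneg] at h4
  rw [H.vadd_comm] at h4
  have h5 : H.vneg y = H.vneg x := H.eq_vneg h4
  have := congrArg H.vneg h5
  rw [H.vneg_vneg, H.vneg_vneg] at this
  exact this.symm

lemma vadd_vzero (x : V) : H.vadd x H.vzero = {x} := by
  ext y
  constructor
  · intro h; exact H.eq_of_mem_vadd_vzero h
  · rintro rfl
    obtain ⟨u, hu⟩ := H.vadd_nonempty y H.vzero
    have := H.eq_of_mem_vadd_vzero hu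
    rwa [this] at hu

lemma smul_vzero (a : F) : H.smul a H.vzero = {H.vzero} := by
  have h := H.mul_smul a K.zero H.vzero
  rw [K.mul_zero, H.zero_smul] at h
  simpa using h.symm

lemma vneg_mem_smul_neg_one (x : V) : H.vneg x ∈ H.smul (K.neg K.one) x := by
  have hsub := H.add_smul K.one (K.neg K.one) x
  have h0 : H.vzero ∈ ⋃ t ∈ K.add K.one (K.neg K.one), H.smul t x := by
    refine Set.mem_biUnion (K.neg_spec K.one).1 ?_
    rw [H.zero_smul]; rfl
  have h1 := hsub h0
  rw [H.one_smul] at h1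
  simp only [Set.mem_iUnion, Set.mem_singleton_iff] at h1
  obtain ⟨u, hu, w, hw, hvw⟩ := h1
  subst hu
  have := H.eq_vneg hvw
  rwa [this] at hw

lemma mem_inv_smul {a c : F} (hc : K.mul c a = K.one) {x y : V}
    (h : x ∈ H.smul a y) : y ∈ H.smul c x := by
  have heq := H.mul_smul c a y
  rw [hc, H.one_smul] at heq
  have hsub : H.smul c x ⊆ {y} := heq ▸ Set.subset_biUnion_of_mem h
  obtain ⟨z, hz⟩ := H.smul_nonempty c x
  have : z = y := hsub hz
  rwa [this] at hz

lemma mem_setVadd {A B : Set V} {x : V} :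
    x ∈ H.setVadd A B ↔ ∃ a ∈ A, ∃ b ∈ B, x ∈ H.vadd a b := by
  simp [setVadd]

lemma setVadd_mono {A A' B B' : Set V} (hA : A ⊆ A') (hB : B ⊆ B') :
    H.setVadd A B ⊆ H.setVadd A' B' := by
  intro x hx
  obtain ⟨a, ha, b, hb, h⟩ := H.mem_setVadd.1 hx
  exact H.mem_setVadd.2 ⟨a, hA ha, b, hB hb, h⟩

lemma setVadd_assoc (A B C : Set V) :
    H.setVadd (H.setVadd A B) C = H.setVadd A (H.setVadd B C) := by
  ext x
  simp only [mem_setVadd]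
  constructor
  · rintro ⟨t, ⟨a, ha, b, hb, ht⟩, c, hc, hx⟩
    have h1 : x ∈ ⋃ s ∈ H.vadd a b, H.vadd s c := Set.mem_biUnion ht hx
    rw [← H.vadd_assoc] at h1
    obtain ⟨s, hs, hx'⟩ := Set.mem_iUnion₂.1 h1
    exact ⟨a, ha, s, ⟨b, hb, c, hc, hs⟩, hx'⟩
  · rintro ⟨a, ha, t, ⟨b, hb, c, hc, ht⟩, hx⟩
    have h1 : x ∈ ⋃ s ∈ H.vadd b c, H.vadd a s := Set.mem_biUnion ht hx
    rw [H.vadd_assoc] at h1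
    obtain ⟨s, hs, hx'⟩ := Set.mem_iUnion₂.1 h1
    exact ⟨s, ⟨a, ha, b, hb, hs⟩, c, hc, hx'⟩

lemma setVadd_vzero (A : Set V) : H.setVadd A {H.vzero} = A := by
  simp [setVadd, H.vadd_vzero]

lemma hsum_singleton (A : Set V) : H.hsum [A] = A := rfl

lemma hsum_cons_cons (A B : Set V) (L : List (Set V)) :
    H.hsum (A :: B :: L) = H.setVadd A (H.hsum (B :: L)) := rfl

lemma hsum_append (L₁ L₂ : List (Set V)) (h₁ : L₁ ≠ []) (h₂ : L₂ ≠ []) :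
    H.hsum (L₁ ++ L₂) = H.setVadd (H.hsum L₁) (H.hsum L₂) := by
  induction L₁ with
  | nil => simp at h₁
  | cons A L ih =>
    cases L with
    | nil =>
      cases L₂ with
      | nil => simp at h₂
      | cons B R => rfl
    | cons C R =>
      have : (A :: C :: R) ++ L₂ = A :: C :: (R ++ L₂) := rfl
      rw [this]
      rw [H.hsum_cons_cons]
      have hC : (C :: R) ++ L₂ = C :: (R ++ L₂) := rfl
      rw [← hC, ih (by simp)]
      rw [H.hsum_cons_cons, ← H.setVadd_assoc]

lemma hsum_ofFn_snoc {m : ℕ} (hm : 0 < m) (f : Fin (m + 1) → Set V) :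
    H.hsum (List.ofFn f) =
      H.setVadd (H.hsum (List.ofFn fun i : Fin m => f i.castSucc)) (f (Fin.last m)) := by
  rw [List.ofFn_succ', List.concat_eq_append, H.hsum_append _ _ ?_ (by simp),
    H.hsum_singleton]
  intro h
  have := congrArg List.length h
  simp at this
  omega

lemma lincomb_one (a : Fin 1 → F) (β : Fin 1 → V) :
    H.lincomb a β = H.smul (a 0) (β 0) := by
  simp only [lincomb, List.ofFn_succ, List.ofFn_zero]
  rfl

lemma lincomb_nil (a : Fin 0 → F) (β : Fin 0 → V) :
    H.lincomb a β = {H.vzero} := rfl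

lemma lincomb_snoc {m : ℕ} (hm : 0 < m) (a : Fin (m + 1) → F) (β : Fin (m + 1) → V) :
    H.lincomb a β =
      H.setVadd (H.lincomb (fun j : Fin m => a j.castSucc) (fun j : Fin m => β j.castSucc))
        (H.smul (a (Fin.last m)) (β (Fin.last m))) := by
  unfold lincomb
  rw [H.hsum_ofFn_snoc hm]

lemma smul_lincomb_subset {n : ℕ} (a : Fin n → F) (β : Fin n → V) {x : V}
    (hx : x ∈ H.lincomb a β) (c : F) :
    H.smul c x ⊆ H.lincomb (fun j => K.mul c (a j)) β := by
  induction n generalizing x with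
  | zero =>
    rw [H.lincomb_nil] at hx ⊢
    rw [Set.mem_singleton_iff] at hx
    subst hx
    rw [H.smul_vzero]
  | succ m ih =>
    rcases Nat.eq_zero_or_pos m with hm | hm
    · subst hm
      rw [H.lincomb_one] at hx ⊢
      have h := H.mul_smul c (a 0) (β 0)
      rw [h]
      exact Set.subset_biUnion_of_mem hx
    · rw [H.lincomb_snoc hm] at hx ⊢
      obtain ⟨u, hu, w, hw, hvw⟩ := H.mem_setVadd.1 hx
      have h1 : H.smul c x ⊆ ⋃ t ∈ H.vadd u w, H.smul c t :=
        Set.subset_biUnion_of_mem hvw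
      have h2 := H.smul_vadd c u w
      have h3 : H.smul c x ⊆ H.setVadd (H.smul c u) (H.smul c w) :=
        fun z hz => h2 (h1 hz)
      refine h3.trans (H.setVadd_mono ?_ ?_)
      · exact ih (fun j => a j.castSucc) (fun j => β j.castSucc) hu
      · rw [H.mul_smul]
        exact Set.subset_biUnion_of_mem hw

lemma forward {n : ℕ} (α : Fin n → V) (hα : ∀ i, α i ≠ H.vzero) (hd : H.LinDep α) :
    ∃ i : Fin n, 0 < i.val ∧ ∃ a : Fin i.val → F,
      α i ∈ H.lincomb a (fun j : Fin i.val => α (Fin.castLE i.isLt.le j)) := by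
  induction n with
  | zero =>
    obtain ⟨a, ⟨i, _⟩, _⟩ := hd
    exact i.elim0
  | succ m ih =>
    obtain ⟨a, ⟨i₀, hi₀⟩, hmem⟩ := hd
    by_cases hlast : a (Fin.last m) = K.zero
    · rcases Nat.eq_zero_or_pos m with hm | hm
      · subst hm
        have : i₀ = Fin.last 0 := Fin.ext (by omega)
        rw [this] at hi₀
        exact absurd hlast hi₀
      · rw [H.lincomb_snoc hm, hlast, H.zero_smul, H.setVadd_vzero] at hmem
        have hi₀m : i₀.val < m := by
          rcases Nat.lt_or_ge i₀.val m with h | h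
          · exact h
          · exfalso; apply hi₀
            have hE : i₀ = Fin.last m := Fin.ext (by rw [Fin.val_last]; omega)
            rw [hE]; exact hlast
        have hd' : H.LinDep (fun j : Fin m => α j.castSucc) := by
          refine ⟨fun j => a j.castSucc, ⟨⟨i₀.val, hi₀m⟩, ?_⟩, hmem⟩
          show a ((⟨i₀.val, hi₀m⟩ : Fin m).castSucc) ≠ K.zero
          have hE : (⟨i₀.val, hi₀m⟩ : Fin m).castSucc = i₀ := Fin.ext rfl
          rw [hE]; exact hi₀
        obtain ⟨i, hipos, b, hb⟩ := ih (fun j => α j.castSucc) (fun j => hα j.castSucc) hd'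
        exact ⟨⟨i.val, by omega⟩, hipos, b, hb⟩
    · rcases Nat.eq_zero_or_pos m with hm | hm
      · subst hm
        rw [H.lincomb_one] at hmem
        have hlast0 : a 0 ≠ K.zero := by
          have : (0 : Fin 1) = Fin.last 0 := rfl
          rw [this]; exact hlast
        obtain ⟨c, hc⟩ := K.exists_inv _ hlast0
        have hca : K.mul c (a 0) = K.one := by rw [K.mul_comm]; exact hc
        have h1 := H.mem_inv_smul hca hmem
        rw [H.smul_vzero] at h1
        exact absurd h1 (hα 0)
      · rw [H.lincomb_snoc hm] at hmem
        obtain ⟨u, hu, w, hw, hvw⟩ := H.mem_setVadd.1 hmem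
        have hweq : w = H.vneg u := H.eq_vneg hvw
        obtain ⟨c, hc⟩ := K.exists_inv _ hlast
        have hca : K.mul c (a (Fin.last m)) = K.one := by rw [K.mul_comm]; exact hc
        have h1 : α (Fin.last m) ∈ H.smul c w := H.mem_inv_smul hca hw
        have h2 : w ∈ H.smul (K.neg K.one) u := by
          rw [hweq]; exact H.vneg_mem_smul_neg_one u
        have h3 : H.smul c w ⊆ H.smul (K.mul c (K.neg K.one)) u := by
          rw [H.mul_smul]
          exact Set.subset_biUnion_of_mem h2
        have h4 := H.smul_lincomb_subset (fun j => a j.castSucc)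
          (fun j : Fin m => α j.castSucc) hu (K.mul c (K.neg K.one))
        exact ⟨Fin.last m, hm, fun j => K.mul (K.mul c (K.neg K.one)) (a j.castSucc),
          h4 (h3 h1)⟩

lemma backward {n : ℕ} (α : Fin n → V) (i : Fin n) (hpos : 0 < i.val)
    (a : Fin i.val → F)
    (hmem : α i ∈ H.lincomb a (fun j : Fin i.val => α (Fin.castLE i.isLt.le j))) :
    H.LinDep α := by
  induction n with
  | zero => exact i.elim0
  | succ m ih =>
    by_cases hlast : i = Fin.last m
    · subst hlast
      have hm : 0 < m := hpos
      refine ⟨(Fin.snoc (α := fun _ => F) a (K.neg K.one) : Fin (m + 1) → F),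
        ⟨Fin.last m, ?_⟩, ?_⟩
      · rw [Fin.snoc_last]; exact K.neg_one_ne_zero
      · rw [H.lincomb_snoc hm]
        refine H.mem_setVadd.2 ⟨α (Fin.last m), ?_, H.vneg (α (Fin.last m)), ?_, ?_⟩
        · have heq : (fun j : Fin m => Fin.snoc (α := fun _ => F) a (K.neg K.one) j.castSucc)
              = a := by
            funext j; exact Fin.snoc_castSucc (α := fun _ => F) (K.neg K.one) a j
          rw [heq]
          exact hmem
        · rw [Fin.snoc_last]
          exact H.vneg_mem_smul_neg_one _
        · exact (H.vneg_spec _).1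
    · have him : i.val < m := by
        have := i.isLt
        rcases Nat.lt_or_ge i.val m with h | h
        · exact h
        · exact absurd (Fin.ext (by rw [Fin.val_last]; omega) : i = Fin.last m) hlast
      have hd' : H.LinDep (fun j : Fin m => α j.castSucc) := by
        refine ih (fun j => α j.castSucc) ⟨i.val, him⟩ hpos a ?_
        exact hmem
      obtain ⟨b, ⟨j₀, hj₀⟩, hz⟩ := hd'
      refine ⟨(Fin.snoc (α := fun _ => F) b K.zero : Fin (m + 1) → F),
        ⟨j₀.castSucc, by rw [Fin.snoc_castSucc]; exact hj₀⟩, ?_⟩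
      rw [H.lincomb_snoc (hpos.trans him), Fin.snoc_last, H.zero_smul, H.setVadd_vzero]
      have heq : (fun j : Fin m => Fin.snoc (α := fun _ => F) b K.zero j.castSucc) = b := by
        funext j; exact Fin.snoc_castSucc (α := fun _ => F) K.zero b j
      rw [heq]
      exact hz

end HypervectorSpace

/-- Nonzero vectors `α₁, ..., αₙ` are linearly dependent iff some `αᵢ` (with at
least one predecessor) is a linear combination of the preceding vectors. -/
theorem HypervectorSpace.linDep_iff_mem_lincomb_preceding {F : Type u} {V : Type v}
    {K : Hyperfield F} (H : HypervectorSpace F V K) {n : ℕ}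
    (α : Fin n → V) (hα : ∀ i, α i ≠ H.vzero) :
    H.LinDep α ↔
      ∃ i : Fin n, 0 < i.val ∧ ∃ a : Fin i.val → F,
        α i ∈ H.lincomb a (fun j : Fin i.val => α (Fin.castLE i.isLt.le j)) := by
  constructor
  · exact H.forward α hα
  · rintro ⟨i, hpos, a, h⟩
    exact H.backward α i hpos a h
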